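/- In ℚ[[z]] one has the product identity (1 − 729·z) · I_{0,0} · I_{1,1} · I_{2,2} · I_{3,3} · I_{4,4} = 1, i.e. I_{0,0}·I_{1,1}·I_{2,2}·I_{3,3}·I_{4,4} = (1 − 3⁶·z)^{−1}. -/

import Mathlib

/-- `A_d(w) = (∏_{r=1}^{3d} (3w+r))² · ((∏_{r=1}^{d} (w+r))⁶)⁻¹ ∈ ℚ[[w]]`. -/
noncomputable def Acoef (d : ℕ) : PowerSeries ℚ :=
  (∏ r ∈ Finset.Icc 1 (3 * d), (3 * PowerSeries.X + (r : PowerSeries ℚ))) ^ 2 *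
    ((∏ r ∈ Finset.Icc 1 d, (PowerSeries.X + (r : PowerSeries ℚ))) ^ 6)⁻¹

/-- `Ĩ_q ∈ ℚ[[z]]`: the coefficient of `z^d` is the coefficient of `w^q` in `A_d(w)`. -/
noncomputable def Itil (q : ℕ) : PowerSeries ℚ :=
  PowerSeries.mk fun d => PowerSeries.coeff q (Acoef d)

/-- `S = (ℚ[[z]])[t]`. -/
abbrev S : Type := Polynomial (PowerSeries ℚ)

/-- The operator `z·∂/∂z` on `ℚ[[z]]`. -/
noncomputable def zdz (f : PowerSeries ℚ) : PowerSeries ℚ :=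
  PowerSeries.mk fun n => (n : ℚ) * PowerSeries.coeff n f

/-- The derivation `δ = ∂/∂t + z·∂/∂z` on `S = (ℚ[[z]])[t]`, determined by
`δ(t) = 1` and `δ(z) = z`. -/
noncomputable def deltaOp (p : S) : S :=
  Polynomial.derivative p + p.sum fun n a => Polynomial.C (zdz a) * Polynomial.X ^ n

/-- `I_{0,q} = Σ_{k=0}^{q} (t^k/k!)·Ĩ_{q−k} ∈ S`. -/
noncomputable def I0S (q : ℕ) : S :=
  ∑ k ∈ Finset.range (q + 1),
    Polynomial.C (PowerSeries.C (1 / (k.factorial : ℚ)) * Itil (q - k)) * Polynomial.X ^ k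

/-- The recursion `I_{p,q} = δ(I_{p−1,q} · I_{p−1,p−1}⁻¹)`, where the inverse of the
(constant, unit) polynomial `I_{p−1,p−1}` is taken via the power series inverse of its
constant coefficient. -/
noncomputable def IPQ : ℕ → ℕ → S
  | 0 => I0S
  | p + 1 => fun q => deltaOp (IPQ p q * Polynomial.C (((IPQ p p).coeff 0)⁻¹))

/-! The generating function `Φ(z, w) = Σ_d A_d(w) z^d` satisfies
`(θ + w)⁴ Φ - z · h(θ + w) Φ = w⁴` with `θ = z d/dz` and `h(x) = 9 (3x + 1)² (3x + 2)²`,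
because `(w + d + 1)⁴ A_{d+1} = h(w + d) A_d`. Since `I_{0,q}` is the `w^q`-coefficient of
`e^{tw} Φ` and `δ` acts on `e^{tw} Φ` as `θ + w`, the operator `L = δ⁴ - z · h(δ)` kills
`I_{0,0}, …, I_{0,3}` and sends `I_{0,4}` to `1`.

If an operator `P` of order `≤ k` kills `I_{p,p}, …, I_{p,p+k-1}`, then `P ∘ I_{p,p}` kills `1`,
so it is `Q ∘ δ` with `Q` of order `≤ k - 1`, and `Q` kills `I_{p+1,p+1}, …, I_{p+1,p+k-1}`.
By induction `P(I_{p,p+k}) = lc(P) · I_{p,p} ⋯ I_{p+k,p+k}`; for `P = L`, `p = 0`, `k = 4`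
this reads `1 = (1 - 729 z) · I_{0,0} ⋯ I_{4,4}`. -/

open Polynomial
open scoped PowerSeries

noncomputable def zDeriv : Derivation ℚ ℚ⟦X⟧ ℚ⟦X⟧ :=
  (PowerSeries.X : ℚ⟦X⟧) • PowerSeries.derivative ℚ

lemma coeff_zDeriv (f : ℚ⟦X⟧) (n : ℕ) :
    PowerSeries.coeff n (zDeriv f) = n * PowerSeries.coeff n f := by
  rcases n with _ | n
  · simp [zDeriv]
  · simp only [zDeriv, Derivation.coe_smul, Pi.smul_apply, smul_eq_mul,
      PowerSeries.coeff_succ_X_mul, PowerSeries.coeff_derivative, Nat.cast_add, Nat.cast_one]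
    ring

lemma zdz_eq_zDeriv : zdz = ⇑zDeriv := by
  funext f
  ext n
  rw [zdz, PowerSeries.coeff_mk, coeff_zDeriv]

lemma constantCoeff_zDeriv (f : ℚ⟦X⟧) : PowerSeries.constantCoeff (zDeriv f) = 0 := by
  simp [zDeriv]

lemma zDeriv_C_mul (c : ℚ) (f : ℚ⟦X⟧) :
    zDeriv (PowerSeries.C c * f) = PowerSeries.C c * zDeriv f := by
  rw [← PowerSeries.smul_eq_C_mul, zDeriv.map_smul, PowerSeries.smul_eq_C_mul]

noncomputable def coeffDer : Derivation ℚ S S :=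
  PolynomialModule.equivPolynomialSelf.compDer zDeriv.mapCoeffs

@[simp]
lemma coeff_coeffDer (p : S) (n : ℕ) : (coeffDer p).coeff n = zDeriv (p.coeff n) := rfl

noncomputable def deltaDer : Derivation ℚ S S :=
  (derivative' : Derivation ℚ⟦X⟧ S S).restrictScalars ℚ + coeffDer

lemma deltaOp_eq_deltaDer : deltaOp = ⇑deltaDer := by
  funext p
  ext n : 1
  rw [deltaOp, coeff_add, Polynomial.sum_def, finsetSum_coeff]
  simp only [coeff_C_mul_X_pow, Finset.sum_ite_eq, deltaDer, Derivation.coe_add, Pi.add_apply,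
    Derivation.coe_restrictScalars, derivative'_apply, coeff_add, coeff_coeffDer, zdz_eq_zDeriv]
  split_ifs with h
  · rfl
  · rw [notMem_support_iff.mp h, map_zero]

lemma deltaOp_add (p q : S) : deltaOp (p + q) = deltaOp p + deltaOp q := by
  simp only [deltaOp_eq_deltaDer, map_add]

lemma deltaOp_mul (p q : S) : deltaOp (p * q) = p * deltaOp q + q * deltaOp p := by
  simp only [deltaOp_eq_deltaDer, Derivation.leibniz, smul_eq_mul]

lemma deltaOp_one : deltaOp 1 = 0 := by
  rw [deltaOp_eq_deltaDer, Derivation.map_one_eq_zero]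

lemma coeff_deltaOp (p : S) (k : ℕ) :
    (deltaOp p).coeff k = p.coeff (k + 1) * (k + 1) + zDeriv (p.coeff k) := by
  simp [deltaOp_eq_deltaDer, deltaDer, coeff_derivative]

lemma deltaOp_C (a : ℚ⟦X⟧) : deltaOp (C a) = C (zDeriv a) := by
  ext n : 1
  rcases n with _ | n <;> simp [coeff_deltaOp, coeff_C]

/-- `P ∈ S` read as the differential operator `Σ_j P_j δ^j`, coefficients on the left. -/
noncomputable def opAct (P f : S) : S := P.sum fun j a => C a * deltaOp^[j] f

lemma opAct_monomial (j : ℕ) (a : ℚ⟦X⟧) (f : S) : opAct (monomial j a) f = C a * deltaOp^[j] f :=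
  sum_monomial_index _ _ (by simp)

lemma opAct_C (a : ℚ⟦X⟧) (f : S) : opAct (C a) f = C a * f := by
  rw [← monomial_zero_left, opAct_monomial, Function.iterate_zero_apply, monomial_zero_left]

lemma opAct_add (P Q f : S) : opAct (P + Q) f = opAct P f + opAct Q f :=
  sum_add_index _ _ _ (by simp) (by simp [add_mul])

lemma opAct_sub (P Q f : S) : opAct (P - Q) f = opAct P f - opAct Q f :=
  eq_sub_of_add_eq (by rw [← opAct_add, sub_add_cancel])

lemma opAct_C_mul (a : ℚ⟦X⟧) (P f : S) : opAct (C a * P) f = C a * opAct P f := by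
  induction P using Polynomial.induction_on' with
  | add P Q hP hQ => rw [mul_add, opAct_add, opAct_add, hP, hQ, mul_add]
  | monomial j b => rw [C_mul_monomial, opAct_monomial, opAct_monomial, map_mul, mul_assoc]

lemma opAct_mul_X (P f : S) : opAct (P * X) f = opAct P (deltaOp f) := by
  induction P using Polynomial.induction_on' with
  | add P Q hP hQ => rw [add_mul, opAct_add, opAct_add, hP, hQ]
  | monomial j a =>
    rw [monomial_mul_X, opAct_monomial, opAct_monomial, Function.iterate_succ_apply]

lemma opAct_one_right (P : S) : opAct P 1 = C (P.coeff 0) := by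
  induction P using Polynomial.induction_on' with
  | add P Q hP hQ => rw [opAct_add, hP, hQ, coeff_add, map_add]
  | monomial j a =>
    rcases j with _ | j
    · rw [opAct_monomial, Function.iterate_zero_apply, mul_one, coeff_monomial_same]
    · rw [opAct_monomial, Function.iterate_succ_apply, deltaOp_one,
        Function.iterate_fixed (by rw [deltaOp_eq_deltaDer, map_zero]),
        coeff_monomial_of_ne _ (by omega), mul_zero, C_0]

lemma opAct_eq_opAct_divX {P : S} (hP : P.coeff 0 = 0) (f : S) :
    opAct P f = opAct P.divX (deltaOp f) := by
  conv_lhs => rw [← divX_mul_X_add P, hP, C_0, add_zero]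
  exact opAct_mul_X _ _

noncomputable def deltaComp (P : S) : S := coeffDer P + P * X

lemma opAct_deltaComp (P f : S) : opAct (deltaComp P) f = deltaOp (opAct P f) := by
  induction P using Polynomial.induction_on' with
  | add P Q hP hQ =>
    simp only [deltaComp, map_add, add_mul, opAct_add, deltaOp_add] at hP hQ ⊢
    rw [← hP, ← hQ]
    abel
  | monomial j a =>
    have hcoeff : coeffDer (monomial j a) = monomial j (zDeriv a) := by
      ext n : 1
      simp only [coeff_coeffDer, coeff_monomial]
      split_ifs <;> simp
    rw [deltaComp, hcoeff, opAct_add, monomial_mul_X, opAct_monomial, opAct_monomial,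
      opAct_monomial, deltaOp_mul, deltaOp_C, Function.iterate_succ_apply']
    ring

lemma coeff_deltaComp_succ (P : S) (n : ℕ) :
    (deltaComp P).coeff (n + 1) = zDeriv (P.coeff (n + 1)) + P.coeff n := by
  rw [deltaComp, coeff_add, coeff_coeffDer, coeff_mul_X]

lemma natDegree_deltaComp_le {P : S} {n : ℕ} (hP : P.natDegree ≤ n) :
    (deltaComp P).natDegree ≤ n + 1 := by
  rw [natDegree_le_iff_coeff_eq_zero]
  intro m hm
  obtain ⟨m, rfl⟩ := Nat.exists_eq_add_of_lt hm
  rw [coeff_deltaComp_succ, coeff_eq_zero_of_natDegree_lt (by omega),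
    coeff_eq_zero_of_natDegree_lt (by omega), map_zero, add_zero]

lemma coeff_deltaComp_of_natDegree_le {P : S} {n : ℕ} (hP : P.natDegree ≤ n) :
    (deltaComp P).coeff (n + 1) = P.coeff n := by
  rw [coeff_deltaComp_succ, coeff_eq_zero_of_natDegree_lt (by omega), map_zero, zero_add]

lemma natDegree_deltaComp_iterate_C_le (u : ℚ⟦X⟧) (j : ℕ) :
    (deltaComp^[j] (C u)).natDegree ≤ j := by
  induction j with
  | zero => simp
  | succ j ih => rw [Function.iterate_succ_apply']; exact natDegree_deltaComp_le ih

lemma coeff_deltaComp_iterate_C (u : ℚ⟦X⟧) (j : ℕ) : (deltaComp^[j] (C u)).coeff j = u := by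
  induction j with
  | zero => simp
  | succ j ih =>
    rw [Function.iterate_succ_apply',
      coeff_deltaComp_of_natDegree_le (natDegree_deltaComp_iterate_C_le u j), ih]

lemma opAct_deltaComp_iterate_C (u : ℚ⟦X⟧) (j : ℕ) (f : S) :
    opAct (deltaComp^[j] (C u)) f = deltaOp^[j] (C u * f) := by
  induction j with
  | zero => exact opAct_C u f
  | succ j ih =>
    rw [Function.iterate_succ_apply', Function.iterate_succ_apply', opAct_deltaComp, ih]

noncomputable def compMul (u : ℚ⟦X⟧) (P : S) : S := P.sum fun j a => C a * deltaComp^[j] (C u)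

lemma opAct_compMul (u : ℚ⟦X⟧) (P f : S) : opAct (compMul u P) f = opAct P (C u * f) := by
  induction P using Polynomial.induction_on' with
  | add P Q hP hQ =>
    rw [compMul, sum_add_index _ _ _ (by simp) (by simp [add_mul]), opAct_add, ← compMul,
      ← compMul, hP, hQ, opAct_add]
  | monomial j a =>
    rw [compMul, sum_monomial_index _ _ (by simp), opAct_C_mul, opAct_deltaComp_iterate_C,
      opAct_monomial]

lemma natDegree_compMul_le (u : ℚ⟦X⟧) (P : S) : (compMul u P).natDegree ≤ P.natDegree :=
  natDegree_sum_le_of_forall_le _ _ fun j hj => (natDegree_C_mul_le _ _).trans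
    ((natDegree_deltaComp_iterate_C_le u j).trans (le_natDegree_of_mem_supp j hj))

lemma coeff_compMul_of_natDegree_le (u : ℚ⟦X⟧) {P : S} {k : ℕ} (hP : P.natDegree ≤ k) :
    (compMul u P).coeff k = P.coeff k * u := by
  rw [compMul, Polynomial.sum_def, finsetSum_coeff]
  refine (Finset.sum_eq_single k (fun j hj hjk => ?_) fun hk => ?_).trans ?_
  · have hjk : j < k := lt_of_le_of_ne ((le_natDegree_of_mem_supp j hj).trans hP) hjk
    rw [coeff_C_mul, coeff_eq_zero_of_natDegree_lt
      ((natDegree_deltaComp_iterate_C_le u j).trans_lt hjk), mul_zero]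
  · rw [notMem_support_iff.mp hk, C_0, zero_mul, coeff_zero]
  · rw [coeff_C_mul, coeff_deltaComp_iterate_C]

noncomputable def tower (f : ℕ → S) : ℕ → ℕ → S
  | 0 => f
  | p + 1 => fun q => deltaOp (tower f p q * C ((tower f p p).coeff 0)⁻¹)

lemma IPQ_eq_tower : IPQ = tower I0S := by
  funext p
  induction p with
  | zero => rfl
  | succ p ih => funext q; simp only [IPQ, tower, ih]

lemma opAct_divX_compMul_tower {f : ℕ → S} {p : ℕ}
    (hdiag : C ((tower f p p).coeff 0) = tower f p p)
    (hunit : PowerSeries.constantCoeff ((tower f p p).coeff 0) ≠ 0)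
    {P : S} (hP : opAct P (tower f p p) = 0) (q : ℕ) :
    opAct (compMul ((tower f p p).coeff 0) P).divX (tower f (p + 1) q) =
      opAct P (tower f p q) := by
  set u := (tower f p p).coeff 0
  have hcoeff : (compMul u P).coeff 0 = 0 := by
    have h := opAct_one_right (compMul u P)
    rwa [opAct_compMul, mul_one, hdiag, hP, eq_comm, C_eq_zero] at h
  have hcancel : C u * (tower f p q * C u⁻¹) = tower f p q := by
    rw [mul_left_comm, ← C_mul, PowerSeries.mul_inv_cancel _ hunit, C_1, mul_one]
  simp only [tower]
  rw [← opAct_eq_opAct_divX hcoeff, opAct_compMul, hcancel]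

theorem opAct_tower_eq {f : ℕ → S} (hdiag : ∀ i, C ((tower f i i).coeff 0) = tower f i i)
    (hunit : ∀ i, PowerSeries.constantCoeff ((tower f i i).coeff 0) ≠ 0) (k p : ℕ) (P : S)
    (hP : P.natDegree ≤ k) (hkill : ∀ j < k, opAct P (tower f p (p + j)) = 0) :
    opAct P (tower f p (p + k)) =
      C (P.coeff k * ∏ i ∈ Finset.range k, (tower f (p + i) (p + i)).coeff 0) *
        tower f (p + k) (p + k) := by
  induction k generalizing p P with
  | zero =>
    rw [eq_C_of_natDegree_le_zero hP, opAct_C]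
    simp
  | succ k ih =>
    set u := (tower f p p).coeff 0
    have hstep := opAct_divX_compMul_tower (hdiag p) (hunit p) (P := P)
      (by simpa using hkill 0 (by omega))
    have hdeg : (compMul u P).divX.natDegree ≤ k := by
      rw [natDegree_divX_eq_natDegree_tsub_one]
      have := natDegree_compMul_le u P
      omega
    have h := ih (p + 1) _ hdeg fun j hj => by
      rw [hstep, show p + 1 + j = p + (j + 1) by omega]
      exact hkill _ (by omega)
    rw [hstep, coeff_divX, coeff_compMul_of_natDegree_le u hP] at h
    have hprod : ∏ i ∈ Finset.range (k + 1), (tower f (p + i) (p + i)).coeff 0 =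
        (∏ i ∈ Finset.range k, (tower f (p + 1 + i) (p + 1 + i)).coeff 0) * u := by
      simp only [Finset.prod_range_succ', add_zero, add_right_comm p 1, add_assoc]
      rfl
    rw [show p + (k + 1) = p + 1 + k by omega, h, hprod, mul_assoc, mul_comm u]

/-- The `w^q`-coefficient of `e^{tw} · Σ_m v_m w^m`, on which `δ` acts as `z d/dz + w`. -/
noncomputable def jet (v : ℕ → ℚ⟦X⟧) (q : ℕ) : S :=
  ∑ k ∈ Finset.range (q + 1), C (PowerSeries.C (1 / (k.factorial : ℚ)) * v (q - k)) * X ^ k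

noncomputable def theta (v : ℕ → ℚ⟦X⟧) : ℕ → ℚ⟦X⟧
  | 0 => zDeriv (v 0)
  | m + 1 => zDeriv (v (m + 1)) + v m

lemma I0S_eq_jet : I0S = jet Itil := rfl

lemma coeff_jet (v : ℕ → ℚ⟦X⟧) (q k : ℕ) :
    (jet v q).coeff k =
      if k ≤ q then PowerSeries.C (1 / (k.factorial : ℚ)) * v (q - k) else 0 := by
  simp only [jet, finsetSum_coeff, coeff_C_mul_X_pow, Finset.sum_ite_eq, Finset.mem_range,
    Nat.lt_succ_iff]

lemma jet_zero (v : ℕ → ℚ⟦X⟧) : jet v 0 = C (v 0) := by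
  simp [jet]

lemma jet_add (v w : ℕ → ℚ⟦X⟧) (q : ℕ) : jet (v + w) q = jet v q + jet w q := by
  ext k : 1
  simp only [coeff_add, coeff_jet, Pi.add_apply]
  split_ifs <;> ring

lemma jet_sub (v w : ℕ → ℚ⟦X⟧) (q : ℕ) : jet (v - w) q = jet v q - jet w q := by
  ext k : 1
  simp only [coeff_sub, coeff_jet, Pi.sub_apply]
  split_ifs <;> ring

lemma C_mul_jet (g : ℚ⟦X⟧) (v : ℕ → ℚ⟦X⟧) (q : ℕ) : C g * jet v q = jet (g • v) q := by
  ext k : 1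
  simp only [coeff_C_mul, coeff_jet, Pi.smul_apply, smul_eq_mul]
  split_ifs <;> ring

lemma jet_succ_of_apply_zero {v : ℕ → ℚ⟦X⟧} (hv : v 0 = 0) (n : ℕ) :
    jet v (n + 1) = jet (fun m => v (m + 1)) n := by
  ext k : 1
  simp only [coeff_jet]
  split_ifs with h₁ h₂ h₂
  · rw [show n + 1 - k = n - k + 1 by omega]
  · rw [show k = n + 1 by omega, Nat.sub_self, hv, mul_zero]
  · omega
  · rfl

lemma jet_single_of_lt {n q : ℕ} (h : q < n) (c : ℚ⟦X⟧) : jet (Pi.single n c) q = 0 := by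
  ext k : 1
  rw [coeff_jet, coeff_zero]
  split_ifs with hk
  · rw [Pi.single_apply, if_neg (by omega), mul_zero]
  · rfl

lemma jet_single_self (n : ℕ) (c : ℚ⟦X⟧) : jet (Pi.single n c) n = C c := by
  ext k : 1
  rw [coeff_jet, coeff_C, Pi.single_apply]
  rcases k with _ | k
  · simp
  · rw [if_neg k.succ_ne_zero]
    split_ifs with hk hn
    · omega
    · rw [mul_zero]
    · rfl

lemma C_inv_factorial_succ_mul (k : ℕ) :
    PowerSeries.C (1 / ((k + 1).factorial : ℚ)) * ((k : ℚ⟦X⟧) + 1) =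
      PowerSeries.C (1 / (k.factorial : ℚ)) := by
  rw [show (k : ℚ⟦X⟧) + 1 = PowerSeries.C ((k : ℚ) + 1) by simp, ← map_mul, Nat.factorial_succ]
  congr 1
  push_cast
  field_simp

lemma deltaOp_jet (v : ℕ → ℚ⟦X⟧) (q : ℕ) : deltaOp (jet v q) = jet (theta v) q := by
  ext k : 1
  rw [coeff_deltaOp, coeff_jet, coeff_jet, coeff_jet]
  rcases lt_trichotomy k q with hk | rfl | hk
  · rw [if_pos (Nat.succ_le_of_lt hk), if_pos hk.le, if_pos hk.le,
      show q - k = q - (k + 1) + 1 by omega, theta, zDeriv_C_mul]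
    linear_combination v (q - (k + 1)) * C_inv_factorial_succ_mul k
  · rw [if_neg (by omega), if_pos le_rfl, if_pos le_rfl, Nat.sub_self, theta, zDeriv_C_mul,
      zero_mul, zero_add]
  · rw [if_neg (by omega), if_neg (by omega), if_neg (by omega), zero_mul, zero_add, map_zero]

lemma deltaOp_iterate_jet (v : ℕ → ℚ⟦X⟧) (q n : ℕ) :
    deltaOp^[n] (jet v q) = jet (theta^[n] v) q := by
  induction n with
  | zero => rfl
  | succ n ih => rw [Function.iterate_succ_apply', ih, deltaOp_jet, Function.iterate_succ_apply']

lemma tower_jet {v : ℕ → ℚ⟦X⟧} (hv : PowerSeries.constantCoeff (v 0) ≠ 0) (p : ℕ) :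
    ∃ u : ℕ → ℚ⟦X⟧, PowerSeries.constantCoeff (u 0) ≠ 0 ∧
      ∀ n, tower (jet v) p (p + n) = jet u n := by
  induction p with
  | zero => exact ⟨v, hv, fun n => by rw [zero_add]; rfl⟩
  | succ p ih =>
    obtain ⟨u, hu, htower⟩ := ih
    have hdiag : tower (jet v) p p = C (u 0) := by simpa [jet_zero] using htower 0
    have hunit : (u 0)⁻¹ * u 0 = 1 := PowerSeries.inv_mul_cancel _ hu
    refine ⟨fun m => theta ((u 0)⁻¹ • u) (m + 1), ?_, fun n => ?_⟩
    · simp [theta, constantCoeff_zDeriv, hunit]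
    · have h0 : theta ((u 0)⁻¹ • u) 0 = 0 := by
        rw [theta, Pi.smul_apply, smul_eq_mul, hunit, Derivation.map_one_eq_zero]
      simp only [tower]
      rw [hdiag, coeff_C_zero, show p + 1 + n = p + (n + 1) by omega, htower, mul_comm,
        C_mul_jet, deltaOp_jet, jet_succ_of_apply_zero h0]

lemma tower_jet_diag {v : ℕ → ℚ⟦X⟧} (hv : PowerSeries.constantCoeff (v 0) ≠ 0) (i : ℕ) :
    C ((tower (jet v) i i).coeff 0) = tower (jet v) i i ∧
      PowerSeries.constantCoeff ((tower (jet v) i i).coeff 0) ≠ 0 := by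
  obtain ⟨u, hu, htower⟩ := tower_jet hv i
  have hdiag := htower 0
  rw [add_zero, jet_zero] at hdiag
  rw [hdiag, coeff_C_zero]
  exact ⟨rfl, hu⟩

noncomputable def transposeSeq (F : ℕ → ℚ⟦X⟧) (m : ℕ) : ℚ⟦X⟧ :=
  PowerSeries.mk fun d => PowerSeries.coeff m (F d)

lemma Itil_eq_transposeSeq : Itil = transposeSeq Acoef := rfl

lemma theta_transposeSeq (F : ℕ → ℚ⟦X⟧) :
    theta (transposeSeq F) =
      transposeSeq fun d => (PowerSeries.X + PowerSeries.C (d : ℚ)) * F d := by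
  funext m
  ext d
  rcases m with _ | m <;>
    simp only [theta, transposeSeq, PowerSeries.coeff_mk, coeff_zDeriv, add_mul, map_add,
      PowerSeries.coeff_C_mul, PowerSeries.coeff_succ_X_mul, PowerSeries.coeff_zero_X_mul] <;>
    ring

lemma theta_iterate_transposeSeq (F : ℕ → ℚ⟦X⟧) (n : ℕ) :
    theta^[n] (transposeSeq F) =
      transposeSeq fun d => (PowerSeries.X + PowerSeries.C (d : ℚ)) ^ n * F d := by
  induction n with
  | zero => simp
  | succ n ih =>
    rw [Function.iterate_succ_apply', ih, theta_transposeSeq]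
    congr 1
    funext d
    ring

lemma C_smul_transposeSeq (c : ℚ) (F : ℕ → ℚ⟦X⟧) :
    PowerSeries.C c • transposeSeq F = transposeSeq fun d => PowerSeries.C c * F d := by
  funext m
  ext d
  simp [transposeSeq, PowerSeries.coeff_C_mul]

lemma opAct_map_jet_transposeSeq (P : ℚ[X]) (F : ℕ → ℚ⟦X⟧) (q : ℕ) :
    opAct (P.map (algebraMap ℚ ℚ⟦X⟧)) (jet (transposeSeq F) q) =
      jet (transposeSeq fun d => aeval (PowerSeries.X + PowerSeries.C (d : ℚ)) P * F d) q := by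
  induction P using Polynomial.induction_on' with
  | add P Q hP hQ =>
    rw [Polynomial.map_add, opAct_add, hP, hQ, ← jet_add]
    congr 1
    funext m
    ext d
    simp [transposeSeq, add_mul]
  | monomial n c =>
    rw [Polynomial.map_monomial, opAct_monomial, deltaOp_iterate_jet, theta_iterate_transposeSeq,
      C_mul_jet]
    simp [C_smul_transposeSeq, aeval_monomial, mul_assoc]

lemma Acoef_zero : Acoef 0 = 1 := by
  simp [Acoef]

lemma Acoef_succ (d : ℕ) :
    Acoef (d + 1) = Acoef d *
      ((3 * PowerSeries.X + (3 * d + 1 : ℚ⟦X⟧)) * (3 * PowerSeries.X + (3 * d + 2 : ℚ⟦X⟧)) *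
        (3 * PowerSeries.X + (3 * d + 3 : ℚ⟦X⟧))) ^ 2 *
      ((PowerSeries.X + (d + 1 : ℚ⟦X⟧)) ^ 6)⁻¹ := by
  simp only [Acoef]
  rw [show 3 * (d + 1) = 3 * d + 1 + 1 + 1 by ring, Finset.prod_Icc_succ_top (by omega),
    Finset.prod_Icc_succ_top (by omega), Finset.prod_Icc_succ_top (by omega),
    Finset.prod_Icc_succ_top (by omega)]
  simp only [mul_pow, PowerSeries.mul_inv_rev]
  push_cast
  ring

noncomputable def hgPoly : ℚ[X] := 9 * (3 * X + 1) ^ 2 * (3 * X + 2) ^ 2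

lemma Acoef_succ_mul (d : ℕ) :
    (PowerSeries.X + PowerSeries.C ((d + 1 : ℕ) : ℚ)) ^ 4 * Acoef (d + 1) =
      aeval (PowerSeries.X + PowerSeries.C (d : ℚ)) hgPoly * Acoef d := by
  have hinv : (PowerSeries.X + (d + 1 : ℚ⟦X⟧)) ^ 6 * ((PowerSeries.X + (d + 1 : ℚ⟦X⟧)) ^ 6)⁻¹ = 1 :=
    PowerSeries.mul_inv_cancel _ (by simp; positivity)
  rw [Acoef_succ, hgPoly]
  simp only [map_natCast, map_mul, map_pow, map_add, aeval_X, map_ofNat, map_one, Nat.cast_add,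
    Nat.cast_one]
  linear_combination (9 * (3 * PowerSeries.X + (3 * d + 1 : ℚ⟦X⟧)) ^ 2 *
    (3 * PowerSeries.X + (3 * d + 2 : ℚ⟦X⟧)) ^ 2 * Acoef d) * hinv

noncomputable def hyperOp : S := X ^ 4 - C PowerSeries.X * hgPoly.map (algebraMap ℚ ℚ⟦X⟧)

lemma natDegree_hyperOp_le : hyperOp.natDegree ≤ 4 := by
  have : hgPoly.natDegree ≤ 4 := by rw [hgPoly]; compute_degree
  refine (natDegree_sub_le _ _).trans (max_le (natDegree_X_pow_le 4) ?_)
  exact (natDegree_C_mul_le _ _).trans (natDegree_map_le.trans this)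

lemma coeff_hyperOp_four : hyperOp.coeff 4 = 1 - 729 * PowerSeries.X := by
  have : hgPoly = 729 * X ^ 4 + 1458 * X ^ 3 + 1053 * X ^ 2 + 324 * X + 36 := by
    rw [hgPoly]; ring
  simp [hyperOp, this, coeff_X, mul_comm]

lemma transposeSeq_Acoef_recurrence :
    (transposeSeq fun d => aeval (PowerSeries.X + PowerSeries.C (d : ℚ)) (X ^ 4 : ℚ[X]) * Acoef d) -
      (PowerSeries.X : ℚ⟦X⟧) •
        transposeSeq (fun d => aeval (PowerSeries.X + PowerSeries.C (d : ℚ)) hgPoly * Acoef d) =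
      Pi.single 4 1 := by
  funext m
  ext d
  rcases d with _ | d
  · simp only [Pi.sub_apply, Pi.smul_apply, smul_eq_mul, map_sub, transposeSeq,
      PowerSeries.coeff_mk, PowerSeries.coeff_zero_X_mul, sub_zero, Nat.cast_zero, map_zero,
      add_zero, Acoef_zero, mul_one, aeval_X_pow, PowerSeries.coeff_X_pow, Pi.single_apply]
    split_ifs <;> simp
  · simp only [Pi.sub_apply, Pi.smul_apply, smul_eq_mul, map_sub, transposeSeq,
      PowerSeries.coeff_mk, PowerSeries.coeff_succ_X_mul, aeval_X_pow]
    rw [Acoef_succ_mul, sub_self, Pi.single_apply]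
    split_ifs <;> simp

lemma opAct_hyperOp_jet_Itil (q : ℕ) : opAct hyperOp (jet Itil q) = jet (Pi.single 4 1) q := by
  have hX4 : (X ^ 4 : S) = (X ^ 4 : ℚ[X]).map (algebraMap ℚ ℚ⟦X⟧) := by simp
  rw [hyperOp, hX4, opAct_sub, opAct_C_mul, Itil_eq_transposeSeq,
    opAct_map_jet_transposeSeq, opAct_map_jet_transposeSeq, C_mul_jet, ← jet_sub,
    transposeSeq_Acoef_recurrence]

/-- The product identity `(1 − 729·z)·I_{0,0}·I_{1,1}·I_{2,2}·I_{3,3}·I_{4,4} = 1`,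
i.e. `I_{0,0}·I_{1,1}·I_{2,2}·I_{3,3}·I_{4,4} = (1 − 3⁶·z)⁻¹`. -/
theorem IPQ_product_identity :
    (1 - 729 * Polynomial.C (PowerSeries.X : PowerSeries ℚ)) *
      IPQ 0 0 * IPQ 1 1 * IPQ 2 2 * IPQ 3 3 * IPQ 4 4 = 1 := by
  have hv : PowerSeries.constantCoeff (Itil 0) ≠ 0 := by
    rw [Itil, ← PowerSeries.coeff_zero_eq_constantCoeff, PowerSeries.coeff_mk, Acoef_zero,
      PowerSeries.coeff_zero_one]
    exact one_ne_zero
  rw [IPQ_eq_tower, I0S_eq_jet]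
  have hdiag i := (tower_jet_diag hv i).1
  have key := opAct_tower_eq hdiag (fun i => (tower_jet_diag hv i).2) 4 0 hyperOp
    natDegree_hyperOp_le fun j hj => by
      rw [zero_add]
      exact (opAct_hyperOp_jet_Itil j).trans (jet_single_of_lt hj 1)
  rw [zero_add, show tower (jet Itil) 0 4 = jet Itil 4 from rfl, opAct_hyperOp_jet_Itil,
    jet_single_self, coeff_hyperOp_four] at key
  simp only [Finset.prod_range_succ, Finset.prod_range_zero, zero_add, map_mul, one_mul, map_sub,
    map_one, map_ofNat] at key
  rw [← hdiag 0, ← hdiag 1, ← hdiag 2, ← hdiag 3]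
  linear_combination -key
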